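/- arXiv:1204.1295 — 4 statements merged into one kernel-verified Lean document; each statement's English description precedes it below -/
import Mathlib

section
/- For all vectors x, y in ℝ^M and any real p ≥ 2, the inequality (|x|^{p-2} x − |y|^{p-2} y) · (x − y) ≥ 2^{2−p} |x − y|^p holds, where · is the Euclidean inner product and |·| the Euclidean norm. -/
open scoped RealInnerProductSpace

lemma aux_rpow_pred_mul (a : ℝ) (ha : 0 ≤ a) {r : ℝ} (hr : 0 < r) :
    a ^ (r - 1) * a = a ^ r := by
  rcases ha.eq_or_lt with h | h
  · subst h
    rw [Real.zero_rpow hr.ne', mul_zero]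
  · rw [← Real.rpow_add_one h.ne', sub_add_cancel]

lemma aux_sq_rpow_half (c : ℝ) (hc : 0 ≤ c) (p : ℝ) :
    ((c ^ 2 : ℝ)) ^ (p / 2) = c ^ p := by
  rw [← Real.rpow_two, ← Real.rpow_mul hc, show 2 * (p/2) = p by ring]

lemma aux_superadd {x y q : ℝ} (hx : 0 ≤ x) (hy : 0 ≤ y) (hq : 1 ≤ q) :
    x ^ q + y ^ q ≤ (x + y) ^ q := by
  have h := NNReal.add_rpow_le_rpow_add (x.toNNReal) (y.toNNReal) hq
  have h2 := (NNReal.coe_le_coe).2 h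
  simpa [NNReal.coe_rpow, hx, hy] using h2

lemma aux_midpoint {x y q : ℝ} (hx : 0 ≤ x) (hy : 0 ≤ y) (hq : 1 ≤ q) :
    ((x + y) / 2) ^ q ≤ (x ^ q + y ^ q) / 2 := by
  have h := (convexOn_rpow hq).2 (Set.mem_Ici.2 hx) (Set.mem_Ici.2 hy)
    (by norm_num : (0:ℝ) ≤ 1/2) (by norm_num : (0:ℝ) ≤ 1/2) (by norm_num)
  simp only [smul_eq_mul] at h
  calc ((x + y) / 2) ^ q = (1/2 * x + 1/2 * y) ^ q := by ring_nf
    _ ≤ 1/2 * x ^ q + 1/2 * y ^ q := h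
    _ = (x ^ q + y ^ q) / 2 := by ring

lemma aux_ep1 {a b p : ℝ} (ha : 0 ≤ a) (hb : 0 ≤ b) (hp : 2 ≤ p) :
    (2:ℝ) ^ (2 - p) * (a + b) ^ p ≤ (a + b) * (a ^ (p-1) + b ^ (p-1)) := by
  have hab : (0:ℝ) ≤ a + b := by linarith
  have hmid := aux_midpoint ha hb (by linarith : (1:ℝ) ≤ p - 1)
  rw [Real.div_rpow hab (by norm_num)] at hmid
  have h2pos : (0:ℝ) < (2:ℝ) ^ (p-1) := Real.rpow_pos_of_pos (by norm_num) _
  have h3 : (2:ℝ) ^ (2-p) = 2 / 2 ^ (p-1) := by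
    rw [eq_div_iff h2pos.ne', ← Real.rpow_add (by norm_num : (0:ℝ) < 2)]
    norm_num
  have key : (2:ℝ) ^ (2-p) * (a+b) ^ (p-1) ≤ a ^ (p-1) + b ^ (p-1) := by
    calc (2:ℝ) ^ (2-p) * (a+b) ^ (p-1) = 2 * ((a+b) ^ (p-1) / 2 ^ (p-1)) := by
          rw [h3]; ring
      _ ≤ 2 * ((a ^ (p-1) + b ^ (p-1)) / 2) := by linarith
      _ = a ^ (p-1) + b ^ (p-1) := by ring
  calc (2:ℝ) ^ (2-p) * (a + b) ^ p
      = (a+b) * ((2:ℝ) ^ (2-p) * (a+b) ^ (p-1)) := by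
        rw [← aux_rpow_pred_mul (a+b) hab (by linarith : (0:ℝ) < p)]; ring
    _ ≤ (a+b) * (a ^ (p-1) + b ^ (p-1)) := mul_le_mul_of_nonneg_left key hab

lemma aux_ep2 {a b p : ℝ} (hb : 0 ≤ b) (hba : b ≤ a) (hp : 2 ≤ p) :
    (2:ℝ) ^ (2 - p) * (a - b) ^ p ≤ (a - b) * (a ^ (p-1) - b ^ (p-1)) := by
  have hd : (0:ℝ) ≤ a - b := by linarith
  have hsup := aux_superadd hd hb (by linarith : (1:ℝ) ≤ p - 1)
  rw [sub_add_cancel] at hsup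
  have h1 : (2:ℝ) ^ (2-p) ≤ 1 :=
    Real.rpow_le_one_of_one_le_of_nonpos (by norm_num) (by linarith)
  have h2 : (0:ℝ) ≤ (a-b) ^ p := Real.rpow_nonneg hd p
  calc (2:ℝ) ^ (2-p) * (a - b) ^ p ≤ 1 * (a-b) ^ p :=
        mul_le_mul_of_nonneg_right h1 h2
    _ = (a-b) * (a-b) ^ (p-1) := by
        rw [← aux_rpow_pred_mul (a-b) hd (by linarith : (0:ℝ) < p)]; ring
    _ ≤ (a-b) * (a ^ (p-1) - b ^ (p-1)) :=
        mul_le_mul_of_nonneg_left (by linarith) hd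

lemma aux_key {p a b u : ℝ} (hp : 2 ≤ p) (ha : 0 ≤ a) (hb : 0 ≤ b)
    (h0 : (a-b)^2 ≤ u) (h1 : u ≤ (a+b)^2) :
    (2:ℝ) ^ (2-p) * u ^ (p/2) ≤
      a ^ (p-2) * a^2 + b ^ (p-2) * b^2 - (a ^ (p-2) + b ^ (p-2)) * ((a^2+b^2-u)/2) := by
  have hppos : (0:ℝ) < p := by linarith
  have hp1 : (0:ℝ) < p - 1 := by linarith
  have ha1 : a ^ (p-2) * a = a ^ (p-1) := by
    have := aux_rpow_pred_mul a ha hp1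
    simpa [show p - 1 - 1 = p - 2 by ring] using this
  have ha2 : a ^ (p-1) * a = a ^ p := aux_rpow_pred_mul a ha hppos
  have hb1 : b ^ (p-2) * b = b ^ (p-1) := by
    have := aux_rpow_pred_mul b hb hp1
    simpa [show p - 1 - 1 = p - 2 by ring] using this
  have hb2 : b ^ (p-1) * b = b ^ p := aux_rpow_pred_mul b hb hppos
  have hab : (0:ℝ) ≤ a + b := by linarith
  -- endpoint values
  have hE1 : (2:ℝ) ^ (2-p) * ((a+b)^2) ^ (p/2) ≤
      a ^ (p-2) * a^2 + b ^ (p-2) * b^2 - (a ^ (p-2) + b ^ (p-2)) * ((a^2+b^2-(a+b)^2)/2) := by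
    rw [aux_sq_rpow_half (a+b) hab p]
    have e1 := aux_ep1 ha hb hp
    have expand : (a+b) * (a ^ (p-1) + b ^ (p-1)) =
        a ^ (p-2) * a^2 + b ^ (p-2) * b^2 - (a ^ (p-2) + b ^ (p-2)) * ((a^2+b^2-(a+b)^2)/2) := by
      linear_combination (-(a+b))*ha1 + (-(a+b))*hb1
    linarith
  have hE0 : (2:ℝ) ^ (2-p) * ((a-b)^2) ^ (p/2) ≤
      a ^ (p-2) * a^2 + b ^ (p-2) * b^2 - (a ^ (p-2) + b ^ (p-2)) * ((a^2+b^2-(a-b)^2)/2) := by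
    rcases le_total b a with h | h
    · rw [aux_sq_rpow_half (a-b) (by linarith) p]
      have e2 := aux_ep2 hb h hp
      have expand : (a-b) * (a ^ (p-1) - b ^ (p-1)) =
          a ^ (p-2) * a^2 + b ^ (p-2) * b^2 - (a ^ (p-2) + b ^ (p-2)) * ((a^2+b^2-(a-b)^2)/2) := by
        linear_combination (b-a)*ha1 + (a-b)*hb1
      linarith
    · rw [show (a-b)^2 = (b-a)^2 by ring, aux_sq_rpow_half (b-a) (by linarith) p]
      have e2 := aux_ep2 ha h hp
      have expand : (b-a) * (b ^ (p-1) - a ^ (p-1)) =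
          a ^ (p-2) * a^2 + b ^ (p-2) * b^2 - (a ^ (p-2) + b ^ (p-2)) * ((a^2+b^2-(a-b)^2)/2) := by
        linear_combination (b-a)*ha1 + (a-b)*hb1
      linarith
  -- convexity interpolation
  set u0 : ℝ := (a-b)^2 with hu0def
  set u1 : ℝ := (a+b)^2 with hu1def
  have hle : u0 ≤ u1 := by nlinarith [mul_nonneg ha hb]
  rcases hle.eq_or_lt with he | hlt
  · have huu : u = u0 := le_antisymm (he ▸ h1) h0
    rw [huu]
    exact hE0
  · set l : ℝ := (u - u0)/(u1 - u0) with hldef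
    have hl0 : 0 ≤ l := div_nonneg (by linarith) (by linarith)
    have hl1 : l ≤ 1 := (div_le_one (by linarith)).2 (by linarith)
    have hml : l * (u1 - u0) = u - u0 := div_mul_cancel₀ _ (by linarith)
    have hu : u = (1-l)*u0 + l*u1 := by linear_combination -hml
    have hconv := (convexOn_rpow (by linarith : (1:ℝ) ≤ p/2)).2
      (Set.mem_Ici.2 (sq_nonneg (a-b))) (Set.mem_Ici.2 (sq_nonneg (a+b)))
      (by linarith : (0:ℝ) ≤ 1 - l) hl0 (by ring)
    simp only [smul_eq_mul] at hconv
    rw [← hu] at hconv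
    have h2p : (0:ℝ) ≤ (2:ℝ) ^ (2-p) := (Real.rpow_pos_of_pos (by norm_num) _).le
    calc (2:ℝ) ^ (2-p) * u ^ (p/2)
        ≤ (2:ℝ) ^ (2-p) * ((1-l) * u0 ^ (p/2) + l * u1 ^ (p/2)) :=
          mul_le_mul_of_nonneg_left hconv h2p
      _ = (1-l) * ((2:ℝ) ^ (2-p) * u0 ^ (p/2)) + l * ((2:ℝ) ^ (2-p) * u1 ^ (p/2)) := by ring
      _ ≤ (1-l) * (a ^ (p-2) * a^2 + b ^ (p-2) * b^2 - (a ^ (p-2) + b ^ (p-2)) * ((a^2+b^2-u0)/2))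
          + l * (a ^ (p-2) * a^2 + b ^ (p-2) * b^2 - (a ^ (p-2) + b ^ (p-2)) * ((a^2+b^2-u1)/2)) :=
          add_le_add (mul_le_mul_of_nonneg_left hE0 (by linarith))
            (mul_le_mul_of_nonneg_left hE1 hl0)
      _ = a ^ (p-2) * a^2 + b ^ (p-2) * b^2
          - (a ^ (p-2) + b ^ (p-2)) * ((a^2+b^2-((1-l)*u0 + l*u1))/2) := by ring
      _ = a ^ (p-2) * a^2 + b ^ (p-2) * b^2 - (a ^ (p-2) + b ^ (p-2)) * ((a^2+b^2-u)/2) := by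
          rw [← hu]

/-- For all vectors `x, y ∈ ℝ^M` and any real `p ≥ 2`,
`(|x|^{p-2} x − |y|^{p-2} y) · (x − y) ≥ 2^{2−p} |x − y|^p`. -/
theorem stmt0 (M : ℕ) (hM : 1 ≤ M) (p : ℝ) (hp : 2 ≤ p)
    (x y : EuclideanSpace ℝ (Fin M)) :
    ⟪(‖x‖ ^ (p - 2)) • x - (‖y‖ ^ (p - 2)) • y, x - y⟫ ≥
      (2 : ℝ) ^ (2 - p) * ‖x - y‖ ^ p := by
  have hxy : ⟪x, y⟫ = (‖x‖^2 + ‖y‖^2 - ‖x - y‖^2)/2 := by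
    have h := norm_sub_sq_real x y
    linarith
  have hexp : ⟪(‖x‖ ^ (p - 2)) • x - (‖y‖ ^ (p - 2)) • y, x - y⟫ =
      ‖x‖ ^ (p-2) * ‖x‖^2 + ‖y‖ ^ (p-2) * ‖y‖^2
        - (‖x‖ ^ (p-2) + ‖y‖ ^ (p-2)) * ((‖x‖^2 + ‖y‖^2 - ‖x - y‖^2)/2) := by
    rw [← hxy]
    simp only [inner_sub_left, inner_sub_right, real_inner_smul_left,
      real_inner_self_eq_norm_sq, real_inner_comm y x]
    ring
  have h0 : (‖x‖ - ‖y‖)^2 ≤ ‖x - y‖^2 := by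
    have h := abs_norm_sub_norm_le x y
    have h2 : |‖x‖ - ‖y‖|^2 ≤ ‖x - y‖^2 := pow_le_pow_left₀ (abs_nonneg _) h 2
    rwa [sq_abs] at h2
  have h1 : ‖x - y‖^2 ≤ (‖x‖ + ‖y‖)^2 :=
    pow_le_pow_left₀ (norm_nonneg _) (norm_sub_le x y) 2
  have hkey := aux_key hp (norm_nonneg x) (norm_nonneg y) h0 h1
  rw [ge_iff_le, hexp, show ‖x - y‖ ^ p = ((‖x - y‖^2 : ℝ)) ^ (p/2) from
    (aux_sq_rpow_half _ (norm_nonneg _) p).symm]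
  exact hkey
end

section
/- Let 1 < q < ∞, Ω ⊆ ℝ^N open, and M_q := {u ∈ L^q(Ω) : u(x) ≥ 0 for a.e. x ∈ Ω}. Then for every u ∈ M_q, the Bouligand tangent cone to M_q at u equals {v ∈ L^q(Ω) : v(x) ≥ 0 for a.e. x ∈ Ω with u(x) = 0}. -/
open MeasureTheory Filter Topology Metric Set
open scoped ENNReal

private lemma sub_max_eq' (a : ℝ) : a - max a 0 = -(max (-a) 0) := by
  rcases le_total a 0 with h | h
  · simp [max_eq_right h, max_eq_left (neg_nonneg.2 h)]
  · simp [max_eq_left h, max_eq_right (neg_nonpos.2 h)]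

/-- Let `1 < q < ∞`, `Ω ⊆ ℝ^N` open, and `M_q` the cone of a.e. nonnegative functions in
`L^q(Ω)`. Then the Bouligand tangent cone to `M_q` at any `u ∈ M_q` equals
`{v ∈ L^q(Ω) : v(x) ≥ 0 for a.e. x with u(x) = 0}`. -/
theorem stmt1 (N : ℕ) (Ω : Set (EuclideanSpace ℝ (Fin N))) (hΩ : IsOpen Ω)
    (q : ℝ≥0∞) (hq1 : 1 < q) (hq2 : q ≠ ⊤) [Fact (1 ≤ q)]
    (μ : Measure (EuclideanSpace ℝ (Fin N))) (hμ : μ = volume.restrict Ω)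
    (Mq : Set (Lp ℝ q μ)) (hMq : Mq = {u : Lp ℝ q μ | ∀ᵐ x ∂μ, 0 ≤ u x})
    (u : Lp ℝ q μ) (hu : u ∈ Mq) :
    {v : Lp ℝ q μ |
        liminf (fun α : ℝ => infDist (u + α • v) Mq / α) (𝓝[>] 0) = 0} =
      {v : Lp ℝ q μ | ∀ᵐ x ∂μ, u x = 0 → 0 ≤ v x} := by
  have hq0 : q ≠ 0 := (lt_trans zero_lt_one hq1).ne'
  have hqt : 0 < q.toReal := ENNReal.toReal_pos hq0 hq2
  have hu' : ∀ᵐ x ∂μ, 0 ≤ u x := by rw [hMq] at hu; exact hu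
  have hum : Measurable (⇑u) := (Lp.stronglyMeasurable u).measurable
  have hzero : (0 : Lp ℝ q μ) ∈ Mq := by
    rw [hMq]
    filter_upwards [Lp.coeFn_zero ℝ q μ] with x hx
    rw [hx]
    simp
  have hne : Mq.Nonempty := ⟨0, hzero⟩
  ext v
  have hvm : Measurable (⇑v) := (Lp.stronglyMeasurable v).measurable
  have hF : ∀ α : ℝ, ⇑(u + α • v) =ᵐ[μ] fun x => u x + α * v x := by
    intro α
    filter_upwards [Lp.coeFn_add u (α • v), Lp.coeFn_smul α v] with x h1 h2
    simp only [h1, Pi.add_apply, h2, Pi.smul_apply, smul_eq_mul]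
  simp only [Set.mem_setOf_eq]
  constructor
  · -- tangent cone ⊆ RHS
    intro hlim
    set G : EuclideanSpace ℝ (Fin N) → ℝ :=
      fun x => if u x = 0 then max (-(v x)) 0 else 0 with hGdef
    have hGmeas : Measurable G := by
      exact Measurable.ite (hum (measurableSet_singleton 0))
        ((hvm.neg).max measurable_const) measurable_const
    have hkey : ∀ α : ℝ, 0 < α → ∀ w ∈ Mq,
        ENNReal.ofReal α * eLpNorm G q μ ≤ ENNReal.ofReal (dist (u + α • v) w) := by
      intro α hα w hw
      have hw' : ∀ᵐ x ∂μ, 0 ≤ w x := by rw [hMq] at hw; exact hw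
      have h1 : ENNReal.ofReal (dist (u + α • v) w)
          = eLpNorm (fun x => (u x + α * v x) - w x) q μ := by
        rw [Lp.dist_def, ENNReal.ofReal_toReal]
        · exact eLpNorm_congr_ae ((hF α).sub (Filter.EventuallyEq.refl _ _))
        · rw [eLpNorm_congr_ae (Lp.coeFn_sub (u + α • v) w).symm]
          exact Lp.eLpNorm_ne_top _
      have h2 : eLpNorm (fun x => α * G x) q μ = ENNReal.ofReal α * eLpNorm G q μ := by
        have := eLpNorm_const_smul (c := α) (f := G) (p := q) (μ := μ)
        rw [show (fun x => α * G x) = α • G from rfl, this,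
          Real.enorm_eq_ofReal hα.le]
      rw [h1, ← h2]
      refine eLpNorm_mono_ae ?_
      filter_upwards [hw'] with x hwx
      rw [Real.norm_eq_abs, Real.norm_eq_abs]
      by_cases hux : u x = 0
      · by_cases hvx : 0 ≤ v x
        · simp [hGdef, hux, max_eq_right (neg_nonpos.2 hvx), abs_nonneg]
        · push_neg at hvx
          have hGx : G x = -(v x) := by
            simp [hGdef, hux, max_eq_left (neg_nonneg.2 hvx.le)]
          rw [hGx, hux]
          rw [abs_of_nonneg (by nlinarith)]
          have := neg_le_abs (0 + α * v x - w x)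
          nlinarith
      · simp [hGdef, hux, abs_nonneg]
    have hfin : eLpNorm G q μ ≠ ⊤ := by
      intro htop
      have := hkey 1 one_pos 0 hzero
      rw [htop, ENNReal.ofReal_one, one_mul, top_le_iff] at this
      exact ENNReal.ofReal_ne_top this
    set c : ℝ := (eLpNorm G q μ).toReal with hc
    have hc0 : 0 ≤ c := ENNReal.toReal_nonneg
    have hcle : ∀ᶠ α in 𝓝[>] (0 : ℝ), c ≤ infDist (u + α • v) Mq / α := by
      filter_upwards [self_mem_nhdsWithin] with α (hα : (0:ℝ) < α)
      rw [le_div_iff₀ hα]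
      have hallw : ∀ w ∈ Mq, c * α ≤ dist (u + α • v) w := by
        intro w hw
        have h := hkey α hα w hw
        have := ENNReal.toReal_mono ENNReal.ofReal_ne_top h
        rwa [ENNReal.toReal_mul, ENNReal.toReal_ofReal hα.le,
          ENNReal.toReal_ofReal dist_nonneg, mul_comm] at this
      by_contra hcon
      push_neg at hcon
      rcases (infDist_lt_iff hne).1 hcon with ⟨w, hw, hdlt⟩
      exact absurd (hallw w hw) (not_le.2 hdlt)
    have hcz : c = 0 := by
      by_contra hcne
      have hcpos : 0 < c := lt_of_le_of_ne hc0 (Ne.symm hcne)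
      have hcob : IsCoboundedUnder (· ≥ ·) (𝓝[>] (0:ℝ))
          (fun α : ℝ => infDist (u + α • v) Mq / α) := by
        refine isCoboundedUnder_ge_of_eventually_le _ (x := ‖v‖) ?_
        filter_upwards [self_mem_nhdsWithin] with α (hα : (0:ℝ) < α)
        rw [div_le_iff₀ hα]
        refine le_trans (infDist_le_dist_of_mem hu) ?_
        rw [dist_comm, dist_self_add_right, norm_smul]
        simp [abs_of_nonneg hα.le, mul_comm]
      have hfreq := frequently_lt_of_liminf_lt hcob (by rw [hlim]; exact hcpos)
      rcases (hcle.and_frequently hfreq).exists with ⟨α, h1, h2⟩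
      exact absurd h1 (not_le.2 h2)
    have hG0 : G =ᵐ[μ] 0 := by
      refine (eLpNorm_eq_zero_iff hGmeas.aestronglyMeasurable hq0).1 ?_
      rcases (ENNReal.toReal_eq_zero_iff _).1 hcz with h | h
      · exact h
      · exact absurd h hfin
    filter_upwards [hG0] with x hx hux
    by_contra hvx
    push_neg at hvx
    simp only [hGdef, hux, if_true, Pi.zero_apply] at hx
    have := le_max_left (-(v x)) 0
    rw [hx] at this
    linarith
  · -- RHS ⊆ tangent cone
    intro hv
    set P : ℝ → EuclideanSpace ℝ (Fin N) → ℝ :=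
      fun α x => max (-(u x + α * v x)) 0 / α with hPdef
    have hPel : Tendsto (fun α => eLpNorm (P α) q μ) (𝓝[>] (0:ℝ)) (𝓝 0) := by
      have hlint : Tendsto
          (fun α => ∫⁻ x, (‖P α x‖₊ : ℝ≥0∞) ^ q.toReal ∂μ) (𝓝[>] (0:ℝ))
          (𝓝 (∫⁻ _, (0:ℝ≥0∞) ∂μ)) := by
        refine tendsto_lintegral_filter_of_dominated_convergence
          (fun x => (‖v x‖₊ : ℝ≥0∞) ^ q.toReal) ?_ ?_ ?_ ?_
        · refine Eventually.of_forall fun α => ?_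
          have hm : Measurable (P α) := by
            exact ((hum.add (measurable_const.mul hvm)).neg.max measurable_const).div_const α
          exact ENNReal.continuous_rpow_const.measurable.comp hm.enorm
        · filter_upwards [self_mem_nhdsWithin] with α (hα : (0:ℝ) < α)
          filter_upwards [hu'] with x hux
          refine ENNReal.rpow_le_rpow ?_ hqt.le
          rw [ENNReal.coe_le_coe, ← NNReal.coe_le_coe, coe_nnnorm, coe_nnnorm,
            Real.norm_eq_abs, Real.norm_eq_abs]
          have hP0 : 0 ≤ P α x := by
            refine div_nonneg (le_max_right _ _) hα.le
          rw [abs_of_nonneg hP0, hPdef]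
          rw [div_le_iff₀ hα]
          refine max_le ?_ (by positivity)
          have := neg_abs_le (v x)
          nlinarith [abs_nonneg (v x)]
        · exact (lintegral_rpow_enorm_lt_top_of_eLpNorm_lt_top hq0 hq2
            (Lp.memLp v).2).ne
        · filter_upwards [hu', hv] with x hux hvx
          have hPt : Tendsto (fun α => P α x) (𝓝[>] (0:ℝ)) (𝓝 0) := by
            rcases eq_or_lt_of_le hux with h0 | hpos
            · refine Tendsto.congr' ?_ tendsto_const_nhds
              filter_upwards [self_mem_nhdsWithin] with α (hα : (0:ℝ) < α)
              have hvx' := hvx h0.symm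
              have hle : -(u x + α * v x) ≤ 0 := by nlinarith
              show 0 = P α x
              simp only [hPdef]
              rw [max_eq_right hle, zero_div]
            · refine Tendsto.congr' ?_ tendsto_const_nhds
              have hmem : Ioo (0:ℝ) (u x / (|v x| + 1)) ∈ 𝓝[>] (0:ℝ) := by
                refine Ioo_mem_nhdsGT_of_mem ⟨le_refl _, ?_⟩
                positivity
              filter_upwards [hmem] with α hα
              obtain ⟨hα0, hαlt⟩ := hα
              have hle : -(u x + α * v x) ≤ 0 := by
                rw [lt_div_iff₀ (by positivity)] at hαlt
                nlinarith [neg_abs_le (v x), abs_nonneg (v x)]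
              show 0 = P α x
              simp only [hPdef]
              rw [max_eq_right hle, zero_div]
          have hcont : Tendsto (fun r : ℝ => (‖r‖₊ : ℝ≥0∞) ^ q.toReal) (𝓝 0)
              (𝓝 0) := by
            have h1 : Tendsto (fun r : ℝ => (‖r‖₊ : ℝ≥0∞)) (𝓝 0) (𝓝 0) := by
              have := (ENNReal.continuous_coe.comp continuous_nnnorm).tendsto (0:ℝ)
              simpa [Function.comp_def] using this
            have h2 := (ENNReal.continuous_rpow_const (y := q.toReal)).tendsto 0
            rw [ENNReal.zero_rpow_of_pos hqt] at h2
            exact h2.comp h1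
          exact hcont.comp hPt
      rw [lintegral_zero] at hlint
      have h2 := (ENNReal.continuous_rpow_const (y := 1 / q.toReal)).tendsto 0
      rw [ENNReal.zero_rpow_of_pos (by positivity)] at h2
      have := h2.comp hlint
      refine this.congr fun α => ?_
      rw [eLpNorm_eq_lintegral_rpow_enorm_toReal hq0 hq2]
      rfl
    have htR : Tendsto (fun α => (eLpNorm (P α) q μ).toReal) (𝓝[>] (0:ℝ)) (𝓝 0) := by
      have := (ENNReal.tendsto_toReal (by simp : (0:ℝ≥0∞) ≠ ⊤)).comp hPel
      simpa [Function.comp_def] using this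
    have hg0 : ∀ᶠ α in 𝓝[>] (0:ℝ), 0 ≤ infDist (u + α • v) Mq / α := by
      filter_upwards [self_mem_nhdsWithin] with α (hα : (0:ℝ) < α)
      exact div_nonneg infDist_nonneg hα.le
    have hgle : ∀ᶠ α in 𝓝[>] (0:ℝ),
        infDist (u + α • v) Mq / α ≤ (eLpNorm (P α) q μ).toReal := by
      filter_upwards [self_mem_nhdsWithin] with α (hα : (0:ℝ) < α)
      have hpos : Lp.posPart (u + α • v) ∈ Mq := by
        rw [hMq]
        filter_upwards [Lp.coeFn_posPart (u + α • v)] with x hx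
        rw [hx]; exact le_max_right _ _
      have hd : infDist (u + α • v) Mq ≤
          (eLpNorm (fun x => max (-(u x + α * v x)) 0) q μ).toReal := by
        refine le_trans (infDist_le_dist_of_mem hpos) ?_
        rw [Lp.dist_def]
        have he : eLpNorm (⇑(u + α • v) - ⇑(Lp.posPart (u + α • v))) q μ
            = eLpNorm (fun x => max (-(u x + α * v x)) 0) q μ := by
          rw [show (fun x => max (-(u x + α * v x)) 0)
              = -(fun x => -(max (-(u x + α * v x)) 0)) by funext x; simp,
            eLpNorm_neg]
          refine eLpNorm_congr_ae ?_
          filter_upwards [hF α, Lp.coeFn_posPart (u + α • v)] with x h1 h2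
          simp only [Pi.sub_apply, h2, h1]
          exact sub_max_eq' _
        rw [he]
      have heq : (eLpNorm (P α) q μ).toReal
          = (eLpNorm (fun x => max (-(u x + α * v x)) 0) q μ).toReal / α := by
        have : P α = α⁻¹ • (fun x => max (-(u x + α * v x)) 0) := by
          funext x
          simp only [hPdef, Pi.smul_apply, smul_eq_mul]
          rw [div_eq_inv_mul]
        rw [this, eLpNorm_const_smul, ENNReal.toReal_mul]
        simp only [Real.enorm_eq_ofReal (inv_nonneg.2 hα.le),
          ENNReal.toReal_ofReal (inv_nonneg.2 hα.le)]
        rw [div_eq_inv_mul]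
      rw [heq]
      exact (div_le_div_iff_of_pos_right hα).2 hd
    have htend : Tendsto (fun α : ℝ => infDist (u + α • v) Mq / α)
        (𝓝[>] (0:ℝ)) (𝓝 0) :=
      tendsto_of_tendsto_of_tendsto_of_le_of_le' tendsto_const_nhds htR hg0 hgle
    exact htend.liminf_eq
end

section
/- Let 1 < q < ∞, Ω ⊆ ℝ^N open, u ∈ L^q(Ω) with u ≥ 0 a.e., and v ∈ L^q(Ω) with v(x) ≥ 0 for a.e. x with u(x) = 0. Define v_n(x) := v(x) if v(x) + n u(x) ≥ 0 and v_n(x) := 0 otherwise. Then v_n → v in L^q(Ω). -/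
open MeasureTheory Filter Topology Set
open scoped ENNReal

/-- Let `1 < q < ∞`, `Ω ⊆ ℝ^N` open, `u ∈ L^q(Ω)` with `u ≥ 0` a.e., and `v ∈ L^q(Ω)`
with `v(x) ≥ 0` for a.e. `x` with `u(x) = 0`.  Define `v_n(x) := v(x)` if
`v(x) + n u(x) ≥ 0` and `v_n(x) := 0` otherwise.  Then `v_n → v` in `L^q(Ω)`. -/
theorem stmt2 (N : ℕ) (Ω : Set (EuclideanSpace ℝ (Fin N))) (hΩ : IsOpen Ω)
    (q : ℝ≥0∞) (hq1 : 1 < q) (hq2 : q ≠ ⊤)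
    (μ : Measure (EuclideanSpace ℝ (Fin N))) (hμ : μ = volume.restrict Ω)
    (u v : EuclideanSpace ℝ (Fin N) → ℝ)
    (hu : MemLp u q μ) (hv : MemLp v q μ)
    (hupos : ∀ᵐ x ∂μ, 0 ≤ u x)
    (hvpos : ∀ᵐ x ∂μ, u x = 0 → 0 ≤ v x)
    (vn : ℕ → EuclideanSpace ℝ (Fin N) → ℝ)
    (hvn : ∀ n x, vn n x = if 0 ≤ v x + (n : ℝ) * u x then v x else 0) :
    Tendsto (fun n => eLpNorm (vn n - v) q μ) atTop (𝓝 0) := by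
  have hq0 : q ≠ 0 := (zero_lt_one.trans hq1).ne'
  set p : ℝ := q.toReal with hp
  have hp0 : 0 < p := ENNReal.toReal_pos hq0 hq2
  -- measurable representatives
  obtain ⟨u', hu'm, hu'⟩ := hu.aestronglyMeasurable
  obtain ⟨v', hv'm, hv'⟩ := hv.aestronglyMeasurable
  -- the sequence of functions inside the lintegral
  have hmeas : ∀ n : ℕ, AEMeasurable (fun x => (‖vn n x - v x‖₊ : ℝ≥0∞) ^ p) μ := by
    intro n
    have : (fun x => (‖vn n x - v x‖₊ : ℝ≥0∞) ^ p)
        =ᵐ[μ] fun x => (‖(if 0 ≤ v' x + (n : ℝ) * u' x then v' x else 0) - v' x‖₊ : ℝ≥0∞) ^ p := by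
      filter_upwards [hu', hv'] with x hux hvx
      simp [hvn, hux, hvx]
    refine AEMeasurable.congr ?_ this.symm
    have hset : MeasurableSet {x | 0 ≤ v' x + (n : ℝ) * u' x} := by
      apply measurableSet_le measurable_const
      exact (hv'm.measurable.add (hu'm.measurable.const_mul _))
    have h1 : Measurable fun x => (if 0 ≤ v' x + (n : ℝ) * u' x then v' x else 0) - v' x := by
      exact ((Measurable.ite hset hv'm.measurable measurable_const).sub hv'm.measurable)
    exact ((h1.nnnorm.coe_nnreal_ennreal).pow_const p).aemeasurable
  -- dominated convergence for the lintegral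
  have hbound : ∀ n, ∀ᵐ x ∂μ, (‖vn n x - v x‖₊ : ℝ≥0∞) ^ p ≤ (‖v x‖₊ : ℝ≥0∞) ^ p := by
    intro n
    refine ae_of_all _ fun x => ?_
    gcongr
    rw [hvn]
    split
    · simp
    · simp
  have hlim : ∀ᵐ x ∂μ, Tendsto (fun n => (‖vn n x - v x‖₊ : ℝ≥0∞) ^ p) atTop (𝓝 0) := by
    filter_upwards [hupos, hvpos] with x hux hvx
    have hev : ∀ᶠ n in atTop, (‖vn n x - v x‖₊ : ℝ≥0∞) ^ p = 0 := by
      have : ∀ᶠ n : ℕ in atTop, 0 ≤ v x + (n : ℝ) * u x := by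
        rcases lt_or_eq_of_le hux with hpos | h0
        · rcases le_or_gt 0 (v x) with hv0 | hv0
          · exact Eventually.of_forall fun n => by positivity
          · obtain ⟨n₀, hn₀⟩ := exists_nat_gt (-v x / u x)
            filter_upwards [eventually_ge_atTop n₀] with n hn
            have : -v x / u x < (n : ℝ) := hn₀.trans_le (by exact_mod_cast hn)
            have := (div_lt_iff₀ hpos).mp this
            linarith
        · have := hvx h0.symm
          exact Eventually.of_forall fun n => by rw [← h0]; simpa using this
      filter_upwards [this] with n hn
      rw [hvn, if_pos hn]
      simp [ENNReal.zero_rpow_of_pos hp0]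
    exact Tendsto.congr' (by filter_upwards [hev] with n hn using hn.symm) tendsto_const_nhds
  have hvint : ∫⁻ x, (‖v x‖₊ : ℝ≥0∞) ^ p ∂μ ≠ ⊤ :=
    (lintegral_rpow_enorm_lt_top_of_eLpNorm_lt_top hq0 hq2 hv.2).ne
  have hT : Tendsto (fun n => ∫⁻ x, (‖vn n x - v x‖₊ : ℝ≥0∞) ^ p ∂μ) atTop (𝓝 0) := by
    have := tendsto_lintegral_of_dominated_convergence' (μ := μ)
      (F := fun n x => (‖vn n x - v x‖₊ : ℝ≥0∞) ^ p) (f := fun _ => 0)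
      (fun x => (‖v x‖₊ : ℝ≥0∞) ^ p) hmeas hbound hvint hlim
    simpa using this
  have heq : ∀ n, eLpNorm (vn n - v) q μ
      = (∫⁻ x, (‖vn n x - v x‖₊ : ℝ≥0∞) ^ p ∂μ) ^ (1 / p) := fun n => by
    rw [eLpNorm_eq_lintegral_rpow_enorm_toReal hq0 hq2]; rfl
  simp_rw [heq]
  have hcont : Tendsto (fun t : ℝ≥0∞ => t ^ (1 / p)) (𝓝 0) (𝓝 (0 ^ (1 / p))) :=
    ENNReal.continuous_rpow_const.continuousAt.tendsto
  have h0 : (0 : ℝ≥0∞) ^ (1 / p) = 0 := ENNReal.zero_rpow_of_pos (by positivity)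
  exact h0 ▸ hcont.comp hT
end

section
/- Let X be a reflexive Banach space and n: X → ℝ a C¹ functional such that ⟨Dn(u₁) − Dn(u₂), u₁ − u₂⟩ ≥ κ(‖u₁ − u₂‖)‖u₁ − u₂‖ for all u₁, u₂ ∈ X, where κ: [0,∞) → [0,∞) is continuous with κ⁻¹({0}) = {0} and κ(s) → ∞ as s → ∞. If n is coercive (preimages of (−∞, m) are bounded for all m), then N := Dn: X → X* is a bijection with continuous inverse. -/
open Filter Topology Set


theorem my_ekeland {E : Type*} [MetricSpace E] [CompleteSpace E] [Nonempty E]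
    {f : E → ℝ} (hf : Continuous f) {B : ℝ} (hB : ∀ x, B ≤ f x) {ε : ℝ} (hε : 0 < ε) :
    ∃ u : E, ∀ w, f u ≤ f w + ε * dist u w := by
  classical
  set P : E → E → Prop := fun x y => f y + ε * dist x y ≤ f x with hP
  have hPrefl : ∀ x, P x x := fun x => by simp [hP]
  have hPtrans : ∀ {x y z}, P x y → P y z → P x z := by
    intro x y z h1 h2
    have htri := dist_triangle x z y
    simp only [hP] at *
    nlinarith [dist_nonneg (x := x) (y := y), dist_triangle x y z]
  have hPle : ∀ {x y}, P x y → f y ≤ f x := by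
    intro x y h
    have h0 : 0 ≤ ε * dist x y := mul_nonneg hε.le dist_nonneg
    simp only [hP] at h; linarith
  set m : E → ℝ := fun x => sInf (f '' {y | P x y}) with hm
  have hmne : ∀ x, (f '' {y | P x y}).Nonempty := fun x => ⟨f x, x, hPrefl x, rfl⟩
  have hmbdd : ∀ x, BddBelow (f '' {y | P x y}) := fun x => ⟨B, by rintro _ ⟨y, _, rfl⟩; exact hB y⟩
  have hmle : ∀ x y, P x y → m x ≤ f y := fun x y h => csInf_le (hmbdd x) ⟨y, h, rfl⟩
  have key : ∀ (k : ℕ) (x : E), ∃ y, P x y ∧ f y < m x + (1/2 : ℝ)^k := by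
    intro k x
    have hlt : m x < m x + (1/2:ℝ)^k := lt_add_of_pos_right _ (by positivity)
    obtain ⟨z, ⟨y, hy, rfl⟩, hz⟩ := exists_lt_of_csInf_lt (hmne x) hlt
    exact ⟨y, hy, hz⟩
  set seq : ℕ → E := fun k => Nat.rec (Classical.arbitrary E) (fun j x => (key j x).choose) k
    with hseqdef
  have hseq : ∀ k, P (seq k) (seq (k+1)) ∧ f (seq (k+1)) < m (seq k) + (1/2:ℝ)^k :=
    fun k => (key k (seq k)).choose_spec
  have hchain : ∀ j k, j ≤ k → P (seq j) (seq k) := by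
    intro j k h
    induction h with
    | refl => exact hPrefl _
    | step h ih => exact hPtrans ih (hseq _).1
  have hbdd : BddBelow (Set.range fun k => f (seq k)) := ⟨B, by rintro _ ⟨k, rfl⟩; exact hB _⟩
  set L : ℝ := ⨅ k, f (seq k) with hLdef
  have hanti : Antitone fun k => f (seq k) := fun j k h => hPle (hchain j k h)
  have hL : Tendsto (fun k => f (seq k)) atTop (𝓝 L) := tendsto_atTop_ciInf hanti hbdd
  have hLle : ∀ k, L ≤ f (seq k) := fun k => ciInf_le hbdd k
  have hdistle : ∀ j k, j ≤ k → ε * dist (seq j) (seq k) ≤ f (seq j) - f (seq k) := by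
    intro j k h
    have := hchain j k h
    simp only [hP] at this; linarith
  set b : ℕ → ℝ := fun N => 2 * (f (seq N) - L) / ε with hbdef
  have hcauchy : CauchySeq seq := by
    apply cauchySeq_of_le_tendsto_0 b
    · intro p q N hp hq
      have h1 : ε * dist (seq N) (seq p) ≤ f (seq N) - f (seq p) := hdistle N p hp
      have h2 : ε * dist (seq N) (seq q) ≤ f (seq N) - f (seq q) := hdistle N q hq
      have h3 := hLle p
      have h4 := hLle q
      have htri : dist (seq p) (seq q) ≤ dist (seq N) (seq p) + dist (seq N) (seq q) := by
        rw [dist_comm (seq N) (seq p)]; exact dist_triangle _ _ _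
      rw [hbdef, le_div_iff₀ hε]
      nlinarith
    · have h1 : Tendsto (fun N => f (seq N) - L) atTop (𝓝 (L - L)) := hL.sub tendsto_const_nhds
      have h2 : Tendsto b atTop (𝓝 (2 * (L - L) / ε)) := (h1.const_mul 2).div_const ε
      simpa using h2
  obtain ⟨u, hu⟩ := cauchySeq_tendsto_of_complete hcauchy
  have hfu : f u = L := tendsto_nhds_unique ((hf.continuousAt.tendsto).comp hu) hL
  have hPu : ∀ k, P (seq k) u := by
    intro k
    have h1 : Tendsto (fun j => f (seq j) + ε * dist (seq k) (seq j)) atTop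
        (𝓝 (f u + ε * dist (seq k) u)) :=
      ((hf.continuousAt.tendsto).comp hu).add ((tendsto_const_nhds.dist hu).const_mul ε)
    exact le_of_tendsto h1 (eventually_atTop.2 ⟨k, fun j hj => hchain k j hj⟩)
  refine ⟨u, fun w => ?_⟩
  by_contra hcon
  push_neg at hcon
  have hPuw : P u w := hcon.le
  have hfw : ∀ k, L - (1/2:ℝ)^k < f w := by
    intro k
    have h1 : P (seq k) w := hPtrans (hPu k) hPuw
    have h2 : m (seq k) ≤ f w := hmle _ _ h1
    have h3 := (hseq k).2
    have h4 := hLle (k+1)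
    linarith
  have hLw : L ≤ f w := by
    have hlim : Tendsto (fun k => L - (1/2:ℝ)^k) atTop (𝓝 (L - 0)) :=
      tendsto_const_nhds.sub (tendsto_pow_atTop_nhds_zero_of_lt_one (by norm_num) (by norm_num))
    rw [sub_zero] at hlim
    exact le_of_tendsto hlim (Eventually.of_forall fun k => (hfw k).le)
  have hd : 0 ≤ ε * dist u w := mul_nonneg hε.le dist_nonneg
  rw [hfu] at hcon
  linarith


theorem my_kappa_small {κ : ℝ → ℝ} (hκcont : ContinuousOn κ (Ici 0))
    (hκnonneg : ∀ s ≥ (0:ℝ), 0 ≤ κ s) (hκzero : ∀ s ≥ (0:ℝ), κ s = 0 ↔ s = 0)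
    (hκtop : Tendsto κ atTop atTop) {ε : ℝ} (hε : 0 < ε) :
    ∃ δ > 0, ∀ s ≥ (0:ℝ), κ s < δ → s < ε := by
  obtain ⟨M₀, hM₀⟩ := (hκtop.eventually_ge_atTop 1).exists_forall_of_atTop
  set M : ℝ := max M₀ ε with hMdef
  have hεM : ε ≤ M := le_max_right _ _
  have hMbig : ∀ s ≥ M, 1 ≤ κ s := fun s hs => hM₀ s (le_trans (le_max_left _ _) hs)
  have hKc : IsCompact (Icc ε M) := isCompact_Icc
  have hKne : (Icc ε M).Nonempty := ⟨ε, le_refl _, hεM⟩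
  obtain ⟨s₀, hs₀K, hs₀min⟩ := hKc.exists_isMinOn hKne
    (hκcont.mono (fun x hx => le_trans hε.le hx.1))
  have hs₀pos : 0 < κ s₀ := by
    have h1 : 0 ≤ κ s₀ := hκnonneg s₀ (le_trans hε.le hs₀K.1)
    rcases h1.lt_or_eq with h | h
    · exact h
    · exfalso
      have := (hκzero s₀ (le_trans hε.le hs₀K.1)).1 h.symm
      have := hs₀K.1; linarith [hε]
  refine ⟨min (κ s₀) 1, lt_min hs₀pos one_pos, fun s hs hlt => ?_⟩
  by_contra hcon
  push_neg at hcon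
  rcases le_or_gt s M with h | h
  · have := hs₀min (⟨hcon, h⟩ : s ∈ Icc ε M)
    have h2 : κ s₀ ≤ κ s := this
    have := min_le_left (κ s₀) 1
    linarith
  · have := hMbig s h.le
    have := min_le_right (κ s₀) 1
    linarith


theorem my_line {X : Type*} [NormedAddCommGroup X] [NormedSpace ℝ X]
    (n : X → ℝ) (Dn : X → StrongDual ℝ X) (hC1 : ∀ u, HasFDerivAt n (Dn u) u)
    (κ : ℝ → ℝ)
    (hmono : ∀ u₁ u₂ : X, κ ‖u₁ - u₂‖ * ‖u₁ - u₂‖ ≤ (Dn u₁ - Dn u₂) (u₁ - u₂))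
    (v : X) (a b c : ℝ) (ha : 0 ≤ a) (hab : a ≤ b)
    (hκc : ∀ t, a < t → t < b → c ≤ κ (t * ‖v‖)) :
    (b - a) * ((Dn 0) v + c * ‖v‖) ≤ n (b • v) - n (a • v) := by
  set C : ℝ := (Dn 0) v + c * ‖v‖ with hC
  set h : ℝ → ℝ := fun t => n (t • v) - t * C with hh
  have hline : ∀ t : ℝ, HasDerivAt (fun s : ℝ => n (s • v)) ((Dn (t • v)) v) t := by
    intro t
    have h1 : HasDerivAt (fun s : ℝ => s • v) v t := by
      simpa using (hasDerivAt_id t).smul_const v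
    have h2 : HasFDerivAt n (Dn (t • v)) ((fun s : ℝ => s • v) t) := hC1 (t • v)
    exact h2.comp_hasDerivAt t h1
  have hd : ∀ t : ℝ, HasDerivAt h ((Dn (t • v)) v - C) t :=
    fun t => (hline t).sub (hasDerivAt_mul_const C)
  have hmon : MonotoneOn h (Icc a b) := by
    apply monotoneOn_of_deriv_nonneg (convex_Icc a b)
    · exact fun t _ => ((hd t).continuousAt).continuousWithinAt
    · exact fun t _ => ((hd t).differentiableAt).differentiableWithinAt
    · intro t ht
      rw [interior_Icc] at ht
      rw [(hd t).deriv]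
      have htpos : 0 < t := lt_of_le_of_lt ha ht.1
      have hm := hmono (t • v) 0
      have hnorm : ‖t • v - 0‖ = t * ‖v‖ := by
        rw [sub_zero, norm_smul, Real.norm_eq_abs, abs_of_pos htpos]
      have happ : (Dn (t • v) - Dn 0) (t • v - 0) = t * ((Dn (t • v)) v - (Dn 0) v) := by
        rw [sub_zero, ContinuousLinearMap.sub_apply, map_smul, map_smul]
        simp [smul_eq_mul]; ring
      rw [hnorm, happ] at hm
      have hκ := hκc t ht.1 ht.2
      have h2 : c * (t * ‖v‖) ≤ κ (t * ‖v‖) * (t * ‖v‖) :=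
        mul_le_mul_of_nonneg_right hκ (by positivity)
      have h3 : t * (c * ‖v‖) ≤ t * ((Dn (t • v)) v - (Dn 0) v) := by nlinarith
      have h4 : c * ‖v‖ ≤ (Dn (t • v)) v - (Dn 0) v :=
        le_of_mul_le_mul_left h3 htpos
      rw [hC]; linarith
  have := hmon (left_mem_Icc.2 hab) (right_mem_Icc.2 hab) hab
  simp only [hh] at this
  linarith [this]

/-- Let `X` be a reflexive Banach space and `n : X → ℝ` a `C¹` functional whose
derivative is uniformly monotone with gauge `κ`.  If `n` is coercive, then
`N := Dn : X → X*` is a bijection with continuous inverse. -/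
theorem stmt8 (X : Type*) [NormedAddCommGroup X] [NormedSpace ℝ X] [CompleteSpace X]
    (hrefl : Function.Surjective (NormedSpace.inclusionInDoubleDual ℝ X))
    (n : X → ℝ) (Dn : X → StrongDual ℝ X)
    (hC1 : ∀ u, HasFDerivAt n (Dn u) u) (hDcont : Continuous Dn)
    (κ : ℝ → ℝ) (hκcont : ContinuousOn κ (Ici 0)) (hκnonneg : ∀ s ≥ (0 : ℝ), 0 ≤ κ s)
    (hκzero : ∀ s ≥ (0 : ℝ), κ s = 0 ↔ s = 0)
    (hκtop : Tendsto κ atTop atTop)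
    (hmono : ∀ u₁ u₂ : X, κ ‖u₁ - u₂‖ * ‖u₁ - u₂‖ ≤ (Dn u₁ - Dn u₂) (u₁ - u₂))
    (hcoer : ∀ m : ℝ, Bornology.IsBounded {u : X | n u < m}) :
    Function.Bijective Dn ∧
      ∃ g : StrongDual ℝ X → X,
        Continuous g ∧ Function.LeftInverse g Dn ∧ Function.RightInverse g Dn := by
  classical
  haveI : Nonempty X := ⟨0⟩
  have hκ0 : κ 0 = 0 := (hκzero 0 le_rfl).2 rfl
  have habs : ∀ (T : StrongDual ℝ X) (v : X), |T v| ≤ ‖T‖ * ‖v‖ := fun T v => by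
    have := T.le_opNorm v; rwa [Real.norm_eq_abs] at this
  have hnormge : ∀ u₁ u₂ : X, κ ‖u₁ - u₂‖ ≤ ‖Dn u₁ - Dn u₂‖ := by
    intro u₁ u₂
    rcases eq_or_lt_of_le (norm_nonneg (u₁ - u₂)) with h | h
    · rw [← h, hκ0]; exact norm_nonneg _
    · have h1 := hmono u₁ u₂
      have h2 : (Dn u₁ - Dn u₂) (u₁ - u₂) ≤ ‖Dn u₁ - Dn u₂‖ * ‖u₁ - u₂‖ :=
        (le_abs_self _).trans (habs _ _)
      exact le_of_mul_le_mul_right (h1.trans h2) h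
  have hinj : Function.Injective Dn := by
    intro u₁ u₂ h
    by_contra hne
    have hs : 0 < ‖u₁ - u₂‖ := norm_pos_iff.2 (sub_ne_zero.2 hne)
    have hκpos : 0 < κ ‖u₁ - u₂‖ := by
      rcases (hκnonneg _ (norm_nonneg (u₁ - u₂))).lt_or_eq with h' | h'
      · exact h'
      · exact absurd ((hκzero _ (norm_nonneg _)).1 h'.symm) (ne_of_gt hs)
    have h1 := hmono u₁ u₂
    rw [h, sub_self] at h1
    simp only [ContinuousLinearMap.zero_apply] at h1
    nlinarith
  have hsurj : Function.Surjective Dn := by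
    intro τ
    set f : X → ℝ := fun u => n u - τ u with hfdef
    have hfC1 : ∀ u, HasFDerivAt f (Dn u - τ) u := fun u => (hC1 u).sub τ.hasFDerivAt
    have hfcont : Continuous f := by
      rw [continuous_iff_continuousAt]; exact fun u => (hfC1 u).continuousAt
    set c₀ : ℝ := 2 * (‖τ‖ + ‖Dn 0‖) with hc₀def
    obtain ⟨R₀, hR₀⟩ := (hκtop.eventually_ge_atTop c₀).exists_forall_of_atTop
    set R : ℝ := max R₀ 0 with hRdef
    have hRnn : (0:ℝ) ≤ R := le_max_right _ _
    have hRbig : ∀ s ≥ R, c₀ ≤ κ s := fun s hs => hR₀ s ((le_max_left _ _).trans hs)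
    set B : ℝ := n 0 - (‖Dn 0‖ + ‖τ‖) * (2 * R) with hBdef
    have hlow : ∀ v : X, B ≤ f v := by
      intro v
      have ha1 := abs_le.1 (habs τ v)
      have ha2 := abs_le.1 (habs (Dn 0) v)
      rcases le_or_gt (2 * R) ‖v‖ with hv | hv
      · have h1 := my_line n Dn hC1 κ hmono v 0 (1/2) 0 le_rfl (by norm_num)
          (fun t ht _ => hκnonneg _ (mul_nonneg ht.le (norm_nonneg v)))
        have h2 := my_line n Dn hC1 κ hmono v (1/2) 1 c₀ (by norm_num) (by norm_num)
          (fun t ht _ => hRbig _ (by nlinarith [norm_nonneg v]))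
        simp only [one_smul, zero_smul] at h1 h2
        have hprod : 0 ≤ (‖Dn 0‖ + ‖τ‖) * (2 * R) :=
          mul_nonneg (add_nonneg (norm_nonneg _) (norm_nonneg _)) (by linarith)
        simp only [hfdef]
        nlinarith [norm_nonneg v]
      · have h1 := my_line n Dn hC1 κ hmono v 0 1 0 le_rfl zero_le_one
          (fun t ht _ => hκnonneg _ (mul_nonneg ht.le (norm_nonneg v)))
        simp only [one_smul, zero_smul] at h1
        have h2 : (‖Dn 0‖ + ‖τ‖) * ‖v‖ ≤ (‖Dn 0‖ + ‖τ‖) * (2 * R) :=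
          mul_le_mul_of_nonneg_left hv.le (add_nonneg (norm_nonneg _) (norm_nonneg _))
        simp only [hfdef]
        nlinarith
    have hnear : ∀ ε > (0:ℝ), ∃ u : X, ‖Dn u - τ‖ ≤ ε := by
      intro ε hε
      obtain ⟨u, hu⟩ := my_ekeland hfcont hlow hε
      refine ⟨u, ?_⟩
      have hkey : ∀ w : X, -(ε * ‖w‖) ≤ (Dn u - τ) w := by
        intro w
        have hg : HasDerivAt (fun t : ℝ => f (u + t • w)) ((Dn u - τ) w) 0 := by
          have h1 : HasDerivAt (fun t : ℝ => u + t • w) w 0 := by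
            simpa using ((hasDerivAt_id (0:ℝ)).smul_const w).const_add u
          have h2 : HasFDerivAt f (Dn u - τ) ((fun t : ℝ => u + t • w) 0) := by
            simpa using hfC1 u
          exact h2.comp_hasDerivAt 0 h1
        have hslope : ∀ t : ℝ, 0 < t →
            -(ε * ‖w‖) ≤ slope (fun t : ℝ => f (u + t • w)) 0 t := by
          intro t ht
          have h3 := hu (u + t • w)
          have hd : dist u (u + t • w) = t * ‖w‖ := by
            rw [dist_eq_norm]
            simp [norm_smul, abs_of_pos ht]
          rw [hd] at h3
          have hsl : slope (fun t : ℝ => f (u + t • w)) 0 t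
              = (f (u + t • w) - f u) / t := by
            rw [slope_def_field]
            simp
          rw [hsl, le_div_iff₀ ht]
          nlinarith
        have htend : Tendsto (slope (fun t : ℝ => f (u + t • w)) 0) (𝓝[>] 0)
            (𝓝 ((Dn u - τ) w)) :=
          (hasDerivAt_iff_tendsto_slope.1 hg).mono_left
            (nhdsWithin_mono 0 (fun x hx => ne_of_gt hx))
        exact ge_of_tendsto htend (eventually_nhdsWithin_of_forall (fun t ht => hslope t ht))
      apply ContinuousLinearMap.opNorm_le_bound _ hε.le
      intro v
      have h1 := hkey v
      have h2 := hkey (-v)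
      rw [map_neg, norm_neg] at h2
      rw [Real.norm_eq_abs, abs_le]
      constructor <;> linarith
    have hseqex : ∀ k : ℕ, ∃ u : X, ‖Dn u - τ‖ ≤ 1 / (k + 1) := fun k => hnear _ (by positivity)
    choose U hU using hseqex
    have hcauchy : CauchySeq U := by
      rw [Metric.cauchySeq_iff]
      intro δ hδ
      obtain ⟨δ', hδ'pos, hδ'⟩ := my_kappa_small hκcont hκnonneg hκzero hκtop hδ
      obtain ⟨N, hN⟩ := exists_nat_gt (2 / δ')
      refine ⟨N, fun p hp q hq => ?_⟩
      have hb : ‖Dn (U p) - Dn (U q)‖ < δ' := by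
        have h1 := hU p
        have h2 := hU q
        have htri : ‖Dn (U p) - Dn (U q)‖ ≤ ‖Dn (U p) - τ‖ + ‖Dn (U q) - τ‖ := by
          have heq : Dn (U p) - Dn (U q) = (Dn (U p) - τ) - (Dn (U q) - τ) := by abel
          rw [heq]
          exact norm_sub_le _ _
        have hip : (1:ℝ) / (p + 1) ≤ 1 / (N + 1) := by
          apply one_div_le_one_div_of_le (by positivity)
          have : (N:ℝ) ≤ p := Nat.cast_le.2 hp
          linarith
        have hiq : (1:ℝ) / (q + 1) ≤ 1 / (N + 1) := by
          apply one_div_le_one_div_of_le (by positivity)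
          have : (N:ℝ) ≤ q := Nat.cast_le.2 hq
          linarith
        have hNδ : (2:ℝ) / (N + 1) < δ' := by
          rw [div_lt_iff₀ (by positivity)]
          rw [div_lt_iff₀ hδ'pos] at hN
          nlinarith
        calc ‖Dn (U p) - Dn (U q)‖ ≤ ‖Dn (U p) - τ‖ + ‖Dn (U q) - τ‖ := htri
          _ ≤ 1 / (N + 1) + 1 / (N + 1) := by linarith
          _ < δ' := by rw [← add_div] at *; linarith [hNδ]
      rw [dist_eq_norm]
      exact hδ' _ (norm_nonneg _) (lt_of_le_of_lt (hnormge _ _) hb)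
    obtain ⟨u, hu⟩ := cauchySeq_tendsto_of_complete hcauchy
    refine ⟨u, ?_⟩
    have h1 : Tendsto (fun k => Dn (U k)) atTop (𝓝 (Dn u)) :=
      (hDcont.continuousAt.tendsto).comp hu
    have h2 : Tendsto (fun k => Dn (U k)) atTop (𝓝 τ) := by
      rw [tendsto_iff_norm_sub_tendsto_zero]
      apply squeeze_zero (fun k => norm_nonneg _) hU
      exact tendsto_one_div_add_atTop_nhds_zero_nat
    exact tendsto_nhds_unique h1 h2
  set g : StrongDual ℝ X → X := Function.invFun Dn with hgdef
  have hleft : Function.LeftInverse g Dn := Function.leftInverse_invFun hinj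
  have hright : Function.RightInverse g Dn := Function.rightInverse_invFun hsurj
  have hgcont : Continuous g := by
    rw [Metric.continuous_iff]
    intro τ ε hε
    obtain ⟨δ, hδpos, hδ⟩ := my_kappa_small hκcont hκnonneg hκzero hκtop hε
    refine ⟨δ, hδpos, fun τ' hτ' => ?_⟩
    have h1 := hnormge (g τ') (g τ)
    rw [hright τ', hright τ] at h1
    rw [dist_eq_norm] at hτ' ⊢
    exact hδ _ (norm_nonneg _) (lt_of_le_of_lt h1 hτ')
  exact ⟨⟨hinj, hsurj⟩, g, hgcont, hleft, hright⟩
end
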